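/- Let W ∈ ℝ^{n×n} be nonnegative and doubly stochastic with ρ := ‖W − J‖₂, where J = 11ᵀ/n. Then for every X ∈ ℝ^{d×n} and every γ ∈ [0,1]: ‖X(I − J)((1−γ)I + γW)‖_F ≤ (1 − γ(1 − ρ))·‖X(I − J)‖_F. -/

import Mathlib

open MeasureTheory Finset Real
open scoped RealInnerProductSpace

noncomputable section

/-- Frobenius norm squared of a `d × n` real matrix. -/
def frobSq {d n : ℕ} (A : Matrix (Fin d) (Fin n) ℝ) : ℝ := ∑ k, ∑ i, (A k i) ^ 2

/-- Frobenius norm of a `d × n` real matrix. -/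
def frob {d n : ℕ} (A : Matrix (Fin d) (Fin n) ℝ) : ℝ := Real.sqrt (frobSq A)

/-- The averaging matrix `J = 𝟙𝟙ᵀ/n`. -/
def Jmat (n : ℕ) : Matrix (Fin n) (Fin n) ℝ := Matrix.of fun _ _ => (n : ℝ)⁻¹

/-- The `i`-th column of a matrix, as a vector in Euclidean space. -/
def col {d n : ℕ} (A : Matrix (Fin d) (Fin n) ℝ) (i : Fin n) : EuclideanSpace ℝ (Fin d) :=
  WithLp.toLp 2 (fun k => A k i)

/-- The average of the columns of a matrix. -/
def avg {d n : ℕ} (A : Matrix (Fin d) (Fin n) ℝ) : EuclideanSpace ℝ (Fin d) :=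
  WithLp.toLp 2 (fun k => (∑ i, A k i) / n)

/-- Componentwise `1/√(u + δ)`. -/
def invSq {d : ℕ} (u : EuclideanSpace ℝ (Fin d)) (δ : ℝ) : EuclideanSpace ℝ (Fin d) :=
  WithLp.toLp 2 (fun k => (Real.sqrt (u k + δ))⁻¹)

/-- Componentwise (Hadamard) product of vectors. -/
def odot {d : ℕ} (a b : EuclideanSpace ℝ (Fin d)) : EuclideanSpace ℝ (Fin d) :=
  WithLp.toLp 2 (fun k => a k * b k)

/-- Componentwise `a/√(u + δ)`. -/
def adiv {d : ℕ} (a u : EuclideanSpace ℝ (Fin d)) (δ : ℝ) : EuclideanSpace ℝ (Fin d) :=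
  WithLp.toLp 2 (fun k => a k / Real.sqrt (u k + δ))

/-- Spectral norm of a square real matrix. -/
def specNorm {n : ℕ} (A : Matrix (Fin n) (Fin n) ℝ) : ℝ :=
  ‖LinearMap.toContinuousLinearMap (Matrix.toEuclideanLin A)‖


section Aux

/-- Flatten a matrix into Euclidean space. -/
def matE {d n : ℕ} (A : Matrix (Fin d) (Fin n) ℝ) : EuclideanSpace ℝ (Fin d × Fin n) :=
  (WithLp.equiv 2 _).symm (fun p : Fin d × Fin n => A p.1 p.2)

lemma frob_eq_norm {d n : ℕ} (A : Matrix (Fin d) (Fin n) ℝ) : frob A = ‖matE A‖ := by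
  rw [EuclideanSpace.norm_eq, frob, frobSq]
  congr 1
  rw [Fintype.sum_prod_type]
  refine Finset.sum_congr rfl fun k _ => Finset.sum_congr rfl fun i _ => ?_
  simp [matE, sq_abs, sq]

lemma matE_add {d n : ℕ} (A B : Matrix (Fin d) (Fin n) ℝ) :
    matE (A + B) = matE A + matE B := by
  ext p; simp [matE, Matrix.add_apply]

lemma matE_smul {d n : ℕ} (c : ℝ) (A : Matrix (Fin d) (Fin n) ℝ) :
    matE (c • A) = c • matE A := by
  ext p; simp [matE, Matrix.smul_apply]

lemma specNorm_nonneg {n : ℕ} (A : Matrix (Fin n) (Fin n) ℝ) : 0 ≤ specNorm A :=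
  norm_nonneg _

lemma specNorm_transpose {n : ℕ} (A : Matrix (Fin n) (Fin n) ℝ) :
    specNorm A.transpose = specNorm A := by
  have h1 : A.transpose = A.conjTranspose := by
    ext i j; simp [Matrix.conjTranspose_apply]
  rw [specNorm, h1, Matrix.toEuclideanLin_conjTranspose_eq_adjoint,
    LinearMap.adjoint_toContinuousLinearMap]
  exact ContinuousLinearMap.adjoint.norm_map _

set_option synthInstance.maxHeartbeats 1000000 in
lemma mulVec_norm_le {n : ℕ} (A : Matrix (Fin n) (Fin n) ℝ) (x : EuclideanSpace ℝ (Fin n)) :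
    ‖Matrix.toEuclideanLin A x‖ ≤ specNorm A * ‖x‖ := by
  have := (LinearMap.toContinuousLinearMap (Matrix.toEuclideanLin A)).le_opNorm x
  simpa [specNorm] using this

lemma frob_mul_le {d n : ℕ} (Y : Matrix (Fin d) (Fin n) ℝ) (A : Matrix (Fin n) (Fin n) ℝ) :
    frob (Y * A) ≤ specNorm A * frob Y := by
  have key : ∀ k : Fin d,
      ∑ j, ((Y * A) k j) ^ 2 ≤ specNorm A ^ 2 * ∑ i, (Y k i) ^ 2 := by
    intro k
    set r : EuclideanSpace ℝ (Fin n) := (WithLp.equiv 2 _).symm (fun i => Y k i) with hr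
    have h1 : Matrix.toEuclideanLin A.transpose r = (WithLp.equiv 2 _).symm (fun j => (Y * A) k j) := by
      rw [hr, Matrix.toEuclideanLin_apply_piLp_toLp]
      congr 1
      ext j
      simp [Matrix.mulVec, Matrix.mul_apply, Matrix.transpose_apply, dotProduct, mul_comm]
    have h2 : ‖Matrix.toEuclideanLin A.transpose r‖ ≤ specNorm A * ‖r‖ := by
      rw [← specNorm_transpose A]; exact mulVec_norm_le _ _
    have h3 : ‖Matrix.toEuclideanLin A.transpose r‖ ^ 2 ≤ (specNorm A * ‖r‖) ^ 2 := by
      exact pow_le_pow_left₀ (norm_nonneg _) h2 2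
    have e1 : ‖Matrix.toEuclideanLin A.transpose r‖ ^ 2 = ∑ j, ((Y * A) k j) ^ 2 := by
      rw [h1, EuclideanSpace.norm_eq, Real.sq_sqrt (by positivity)]
      refine Finset.sum_congr rfl fun j _ => ?_
      simp [sq_abs]
    have e2 : ‖r‖ ^ 2 = ∑ i, (Y k i) ^ 2 := by
      rw [EuclideanSpace.norm_eq, Real.sq_sqrt (by positivity)]
      refine Finset.sum_congr rfl fun i _ => ?_
      simp [hr, sq_abs]
    calc ∑ j, ((Y * A) k j) ^ 2 = ‖Matrix.toEuclideanLin A.transpose r‖ ^ 2 := e1.symm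
      _ ≤ (specNorm A * ‖r‖) ^ 2 := h3
      _ = specNorm A ^ 2 * ∑ i, (Y k i) ^ 2 := by rw [mul_pow, e2]
  have hsq : frobSq (Y * A) ≤ specNorm A ^ 2 * frobSq Y := by
    rw [frobSq, frobSq, Finset.mul_sum]
    exact Finset.sum_le_sum fun k _ => key k
  have h0 : 0 ≤ frobSq Y := Finset.sum_nonneg fun k _ => Finset.sum_nonneg fun i _ => sq_nonneg _
  rw [frob, frob]
  calc Real.sqrt (frobSq (Y * A)) ≤ Real.sqrt (specNorm A ^ 2 * frobSq Y) :=
        Real.sqrt_le_sqrt hsq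
    _ = specNorm A * Real.sqrt (frobSq Y) := by
        rw [Real.sqrt_mul (sq_nonneg _), Real.sqrt_sq (specNorm_nonneg A)]

end Aux

/-- For a nonnegative doubly stochastic `W` with `ρ = ‖W − J‖₂ ≤ 1`,
for every `X ∈ ℝ^{d×n}` and every `γ ∈ [0,1]`:
`‖X(I−J)((1−γ)I + γW)‖_F ≤ (1 − γ(1−ρ)) ‖X(I−J)‖_F`. -/
theorem stmt16 (d n : ℕ) (W : Matrix (Fin n) (Fin n) ℝ)
    (hWpos : ∀ i j, 0 ≤ W i j)
    (hWrow : ∀ i, ∑ j, W i j = 1)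
    (hWcol : ∀ j, ∑ i, W i j = 1)
    (ρ : ℝ) (hρ : ρ = specNorm (W - Jmat n)) (hρ1 : ρ ≤ 1) :
    ∀ (X : Matrix (Fin d) (Fin n) ℝ) (γ : ℝ), 0 ≤ γ → γ ≤ 1 →
      frob (X * (1 - Jmat n) * ((1 - γ) • (1 : Matrix (Fin n) (Fin n) ℝ) + γ • W))
        ≤ (1 - γ * (1 - ρ)) * frob (X * (1 - Jmat n)) := by
  intro X γ hγ0 hγ1
  set Y := X * (1 - Jmat n) with hY
  have hJJ : Jmat n * Jmat n = Jmat n := by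
    ext i j
    simp [Jmat, Matrix.mul_apply]
    rcases Nat.eq_zero_or_pos n with h | h
    · exact absurd i.2 (by omega)
    · field_simp
  have hYJ : Y * Jmat n = 0 := by
    rw [hY, Matrix.mul_assoc, sub_mul, one_mul, hJJ, sub_self, Matrix.mul_zero]
  have hsplit : Y * ((1 - γ) • (1 : Matrix (Fin n) (Fin n) ℝ) + γ • W)
      = (1 - γ) • Y + γ • (Y * (W - Jmat n)) := by
    rw [Matrix.mul_add, Matrix.mul_smul, Matrix.mul_smul, Matrix.mul_one,
      Matrix.mul_sub, hYJ, sub_zero]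
  rw [hsplit]
  have hρ0 : 0 ≤ ρ := hρ ▸ specNorm_nonneg _
  have htri : frob ((1 - γ) • Y + γ • (Y * (W - Jmat n)))
      ≤ frob ((1 - γ) • Y) + frob (γ • (Y * (W - Jmat n))) := by
    rw [frob_eq_norm, frob_eq_norm, frob_eq_norm, matE_add]
    exact norm_add_le _ _
  have hs1 : frob ((1 - γ) • Y) = (1 - γ) * frob Y := by
    rw [frob_eq_norm, matE_smul, norm_smul, frob_eq_norm]
    simp [abs_of_nonneg (by linarith : (0:ℝ) ≤ 1 - γ)]
  have hs2 : frob (γ • (Y * (W - Jmat n))) = γ * frob (Y * (W - Jmat n)) := by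
    rw [frob_eq_norm, matE_smul, norm_smul, frob_eq_norm]
    simp [abs_of_nonneg hγ0]
  have hmul : frob (Y * (W - Jmat n)) ≤ ρ * frob Y := by
    rw [hρ]; exact frob_mul_le Y _
  have hfnn : 0 ≤ frob Y := Real.sqrt_nonneg _
  calc frob ((1 - γ) • Y + γ • (Y * (W - Jmat n)))
      ≤ (1 - γ) * frob Y + γ * frob (Y * (W - Jmat n)) := by
        rw [← hs1, ← hs2]; exact htri
    _ ≤ (1 - γ) * frob Y + γ * (ρ * frob Y) := by
        have := mul_le_mul_of_nonneg_left hmul hγ0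
        linarith
    _ = (1 - γ * (1 - ρ)) * frob Y := by ring
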